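/- (Proposition 3.1) Let K̄ = max{|h̃_x(σ)| : x ∈ V, σ ∈ {±1}^V}. If 2q ≤ log|V| − β·K̄, then for every spin configuration σ ∈ {±1}^V, the expected number of spin-flips per update of SCA is at least that of Glauber: E^G_β[|D_{σ,X_σ}|] ≤ E^SCA_{β,q}[|D_{σ,X_σ}|]. -/
import Mathlib


open Finset Real

variable {V : Type*}

/-- The real value (`±1`) of a spin `σ x ∈ ℤˣ = {±1}`. -/
def sp (σ : V → ℤˣ) (x : V) : ℝ := ((σ x : ℤ) : ℝ)

variable [Fintype V] [DecidableEq V]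

/-- The Ising Hamiltonian
`H(σ) = -(1/2)·Σ_{x,y} J_{x,y} σ_x σ_y - Σ_x h_x σ_x`. -/
noncomputable def Ham (J : V → V → ℝ) (h : V → ℝ) (σ : V → ℤˣ) : ℝ :=
  -(1 / 2) * ∑ x, ∑ y, J x y * sp σ x * sp σ y - ∑ x, h x * sp σ x

/-- The symmetrized Hamiltonian
`H̃(σ,τ) = -(1/2)·Σ_{x,y} J_{x,y} σ_x τ_y - (1/2)·Σ_x h_x (σ_x + τ_x)`. -/
noncomputable def Ham2 (J : V → V → ℝ) (h : V → ℝ) (σ τ : V → ℤˣ) : ℝ :=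
  -(1 / 2) * ∑ x, ∑ y, J x y * sp σ x * sp τ y - (1 / 2) * ∑ x, h x * (sp σ x + sp τ x)

/-- The cavity field `h̃_x(σ) = Σ_y J_{x,y} σ_y + h_x`. -/
noncomputable def cavity (J : V → V → ℝ) (h : V → ℝ) (σ : V → ℤˣ) (x : V) : ℝ :=
  ∑ y, J x y * sp σ y + h x

/-- The Boltzmann weight `w^G_β(σ) = e^{-β H(σ)}`. -/
noncomputable def wG (J : V → V → ℝ) (h : V → ℝ) (β : ℝ) (σ : V → ℤˣ) : ℝ :=
  Real.exp (-β * Ham J h σ)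

/-- The Gibbs distribution `π^G_β(σ) = w^G_β(σ) / Σ_τ w^G_β(τ)`. -/
noncomputable def piG (J : V → V → ℝ) (h : V → ℝ) (β : ℝ) (σ : V → ℤˣ) : ℝ :=
  wG J h β σ / ∑ τ : V → ℤˣ, wG J h β τ

/-- `spinFlip σ x` is the configuration `σ^x`, i.e. `σ` with the spin at `x` flipped. -/
def spinFlip (σ : V → ℤˣ) (x : V) : V → ℤˣ := Function.update σ x (-(σ x))

/-- The Glauber transition probability to the one-spin-flipped configuration:
`P^G_β(σ, σ^x) = (1/|V|) · w^G_β(σ^x) / (w^G_β(σ) + w^G_β(σ^x))`. -/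
noncomputable def PGflip (J : V → V → ℝ) (h : V → ℝ) (β : ℝ) (σ : V → ℤˣ) (x : V) : ℝ :=
  (1 / (Fintype.card V : ℝ)) * (wG J h β (spinFlip σ x) / (wG J h β σ + wG J h β (spinFlip σ x)))

/-- The full Glauber transition probability: `P^G_β(σ,σ^x)` to a one-spin-flipped
configuration, `1 - Σ_x P^G_β(σ,σ^x)` for staying, and `0` otherwise. -/
noncomputable def PG (J : V → V → ℝ) (h : V → ℝ) (β : ℝ) (σ τ : V → ℤˣ) : ℝ :=
  if τ = σ then 1 - ∑ x, PGflip J h β σ x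
  else ∑ x ∈ Finset.univ.filter (fun x => τ = spinFlip σ x), PGflip J h β σ x

/-- The SCA weight `w^SCA_{β,q}(σ) = Σ_τ exp(-β H̃(σ,τ) + q Σ_x σ_x τ_x)`. -/
noncomputable def wSCA (J : V → V → ℝ) (h : V → ℝ) (β q : ℝ) (σ : V → ℤˣ) : ℝ :=
  ∑ τ : V → ℤˣ, Real.exp (-β * Ham2 J h σ τ + q * ∑ x, sp σ x * sp τ x)

/-- The SCA transition probability
`P^SCA_{β,q}(σ,τ) = exp(-β H̃(σ,τ) + q Σ_x σ_x τ_x) / w^SCA_{β,q}(σ)`. -/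
noncomputable def PSCA (J : V → V → ℝ) (h : V → ℝ) (β q : ℝ) (σ τ : V → ℤˣ) : ℝ :=
  Real.exp (-β * Ham2 J h σ τ + q * ∑ x, sp σ x * sp τ x) / wSCA J h β q σ

/-- The SCA equilibrium distribution `π^SCA_{β,q}(σ) = w^SCA_{β,q}(σ) / Σ_τ w^SCA_{β,q}(τ)`. -/
noncomputable def piSCA (J : V → V → ℝ) (h : V → ℝ) (β q : ℝ) (σ : V → ℤˣ) : ℝ :=
  wSCA J h β q σ / ∑ τ : V → ℤˣ, wSCA J h β q τ

/-- The disagreement set `D_{σ,τ} = {x ∈ V : σ_x ≠ τ_x}`. -/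
def Dset (σ τ : V → ℤˣ) : Finset V := Finset.univ.filter (fun x => σ x ≠ τ x)

/-- The expected number of spin-flips per update of the Glauber dynamics,
`E^G_β[|D_{σ,X_σ}|] = Σ_τ |D_{σ,τ}| P^G_β(σ,τ)`. -/
noncomputable def EG (J : V → V → ℝ) (h : V → ℝ) (β : ℝ) (σ : V → ℤˣ) : ℝ :=
  ∑ τ : V → ℤˣ, ((Dset σ τ).card : ℝ) * PG J h β σ τ

/-- The expected number of spin-flips per update of the SCA dynamics,
`E^SCA_{β,q}[|D_{σ,X_σ}|] = Σ_τ |D_{σ,τ}| P^SCA_{β,q}(σ,τ)`. -/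
noncomputable def ESCA (J : V → V → ℝ) (h : V → ℝ) (β q : ℝ) (σ : V → ℤˣ) : ℝ :=
  ∑ τ : V → ℤˣ, ((Dset σ τ).card : ℝ) * PSCA J h β q σ τ

/-- `v = Σ_{{x,y} : x≠y} J_{x,y}² + Σ_x h_x²`, the sum over unordered pairs of distinct
vertices written as `(1/2)·Σ_{x≠y} J_{x,y}²`. -/
noncomputable def vtot (J : V → V → ℝ) (h : V → ℝ) : ℝ :=
  (1 / 2) * ∑ x, ∑ y ∈ Finset.univ.filter (fun y => y ≠ x), (J x y) ^ 2 + ∑ x, (h x) ^ 2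


section AuxProp31
set_option linter.unusedSectionVars false
section Aux
variable {V : Type*} [Fintype V] [DecidableEq V]

lemma sp_sq (σ : V → ℤˣ) (x : V) : sp σ x * sp σ x = 1 := by
  unfold sp
  rw [← Int.cast_mul, ← Units.val_mul, Int.units_mul_self]
  norm_num

lemma abs_sp (σ : V → ℤˣ) (x : V) : |sp σ x| = 1 := by
  unfold sp
  rcases Int.units_eq_one_or (σ x) with h | h <;> simp [h]

lemma units_neg_ne (u : ℤˣ) : u ≠ -u := by
  rcases Int.units_eq_one_or u with h | h <;> simp [h] <;> decide

lemma units_ne_iff {u v : ℤˣ} (h : u ≠ v) : v = -u := by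
  rcases Int.units_eq_one_or u with h1 | h1 <;> rcases Int.units_eq_one_or v with h2 | h2 <;>
    simp_all <;> decide

lemma sp_spinFlip (σ : V → ℤˣ) (x z : V) :
    sp (spinFlip σ x) z = sp σ z + (if z = x then (-2) * sp σ x else 0) := by
  unfold spinFlip sp
  rw [Function.update_apply]
  by_cases hz : z = x <;> simp [hz] <;> ring

lemma spinFlip_spinFlip (σ : V → ℤˣ) (x : V) : spinFlip (spinFlip σ x) x = σ := by
  unfold spinFlip
  ext y
  rw [Function.update_apply, Function.update_apply]
  by_cases hy : y = x <;> simp [hy]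

lemma spinFlip_apply_self (σ : V → ℤˣ) (x : V) : spinFlip σ x x = -(σ x) := by
  simp [spinFlip]

end Aux
set_option linter.unusedSectionVars false

lemma Ham2_symm (J : V → V → ℝ) (h : V → ℝ) (hJ : ∀ x y, J x y = J y x) (σ τ : V → ℤˣ) :
    Ham2 J h σ τ = Ham2 J h τ σ := by
  unfold Ham2
  rw [Finset.sum_comm]
  congr 1
  · congr 1
    refine Finset.sum_congr rfl fun y _ => Finset.sum_congr rfl fun x _ => ?_
    rw [hJ x y]; ring
  · congr 1
    refine Finset.sum_congr rfl fun x _ => ?_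
    ring

lemma Ham2_flip (J : V → V → ℝ) (h : V → ℝ) (hJ : ∀ x y, J x y = J y x)
    (σ τ : V → ℤˣ) (x : V) :
    Ham2 J h σ (spinFlip τ x) = Ham2 J h σ τ + sp τ x * cavity J h σ x := by
  unfold Ham2 cavity
  have h1 : ∀ y : V, ∑ z, J y z * sp σ y * sp (spinFlip τ x) z
      = (∑ z, J y z * sp σ y * sp τ z) + J y x * sp σ y * ((-2) * sp τ x) := by
    intro y
    have hz : ∀ z, J y z * sp σ y * sp (spinFlip τ x) z
        = J y z * sp σ y * sp τ z + (if z = x then J y x * sp σ y * ((-2) * sp τ x) else 0) := by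
      intro z
      rw [sp_spinFlip]
      by_cases hz : z = x <;> simp [hz] <;> ring
    rw [Finset.sum_congr rfl fun z _ => hz z, Finset.sum_add_distrib,
      Finset.sum_ite_eq' Finset.univ x]
    simp
  rw [Finset.sum_congr rfl fun y _ => h1 y, Finset.sum_add_distrib]
  have h2 : ∑ y, J y x * sp σ y * ((-2) * sp τ x) = (-2) * sp τ x * ∑ y, J x y * sp σ y := by
    rw [Finset.mul_sum]
    refine Finset.sum_congr rfl fun y _ => ?_
    rw [hJ y x]; ring
  have h3 : ∑ y, h y * (sp σ y + sp (spinFlip τ x) y)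
      = (∑ y, h y * (sp σ y + sp τ y)) + h x * ((-2) * sp τ x) := by
    have hz : ∀ y, h y * (sp σ y + sp (spinFlip τ x) y)
        = h y * (sp σ y + sp τ y) + (if y = x then h x * ((-2) * sp τ x) else 0) := by
      intro y
      rw [sp_spinFlip]
      by_cases hy : y = x <;> simp [hy] <;> ring
    rw [Finset.sum_congr rfl fun y _ => hz y, Finset.sum_add_distrib,
      Finset.sum_ite_eq' Finset.univ x]
    simp
  rw [h2, h3]
  ring

lemma Ham_eq_Ham2 (J : V → V → ℝ) (h : V → ℝ) (σ : V → ℤˣ) :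
    Ham J h σ = Ham2 J h σ σ := by
  unfold Ham Ham2
  have : ∑ x, h x * (sp σ x + sp σ x) = 2 * ∑ x, h x * sp σ x := by
    rw [Finset.mul_sum]; exact Finset.sum_congr rfl fun x _ => by ring
  rw [this]; ring

lemma cavity_spinFlip_self (J : V → V → ℝ) (h : V → ℝ) (hJ0 : ∀ x, J x x = 0)
    (σ : V → ℤˣ) (x : V) :
    cavity J h (spinFlip σ x) x = cavity J h σ x := by
  unfold cavity
  congr 1
  refine Finset.sum_congr rfl fun y _ => ?_
  rw [sp_spinFlip]
  by_cases hy : y = x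
  · subst hy; simp [hJ0]
  · simp [hy]

lemma Ham_flip (J : V → V → ℝ) (h : V → ℝ) (hJ : ∀ x y, J x y = J y x) (hJ0 : ∀ x, J x x = 0)
    (σ : V → ℤˣ) (x : V) :
    Ham J h (spinFlip σ x) = Ham J h σ + 2 * (sp σ x * cavity J h σ x) := by
  rw [Ham_eq_Ham2, Ham_eq_Ham2, Ham2_flip J h hJ (spinFlip σ x) σ x,
    Ham2_symm J h hJ (spinFlip σ x) σ, Ham2_flip J h hJ σ σ x,
    cavity_spinFlip_self J h hJ0]
  ring
/-- The exponent in the SCA kernel. -/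
noncomputable def Fq (J : V → V → ℝ) (h : V → ℝ) (β q : ℝ) (σ τ : V → ℤˣ) : ℝ :=
  -β * Ham2 J h σ τ + q * ∑ x, sp σ x * sp τ x

lemma PSCA_eq (J : V → V → ℝ) (h : V → ℝ) (β q : ℝ) (σ τ : V → ℤˣ) :
    PSCA J h β q σ τ = Real.exp (Fq J h β q σ τ) / ∑ τ' : V → ℤˣ, Real.exp (Fq J h β q σ τ') :=
  rfl

lemma Fq_flip (J : V → V → ℝ) (h : V → ℝ) (β q : ℝ) (hJ : ∀ x y, J x y = J y x)
    (σ τ : V → ℤˣ) (x : V) :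
    Fq J h β q σ (spinFlip τ x)
      = Fq J h β q σ τ - sp τ x * (β * cavity J h σ x + 2 * q * sp σ x) := by
  unfold Fq
  rw [Ham2_flip J h hJ σ τ x]
  have h3 : ∑ y, sp σ y * sp (spinFlip τ x) y
      = (∑ y, sp σ y * sp τ y) + sp σ x * ((-2) * sp τ x) := by
    have hz : ∀ y, sp σ y * sp (spinFlip τ x) y
        = sp σ y * sp τ y + (if y = x then sp σ x * ((-2) * sp τ x) else 0) := by
      intro y
      rw [sp_spinFlip]
      by_cases hy : y = x <;> simp [hy] <;> ring
    rw [Finset.sum_congr rfl fun y _ => hz y, Finset.sum_add_distrib,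
      Finset.sum_ite_eq' Finset.univ x]
    simp
  rw [h3]
  ring

/-- Per-site SCA flip probability. -/
lemma sca_flip_prob (J : V → V → ℝ) (h : V → ℝ) (β q : ℝ) (hJ : ∀ x y, J x y = J y x)
    (σ : V → ℤˣ) (x : V) :
    ∑ τ ∈ Finset.univ.filter (fun τ : V → ℤˣ => σ x ≠ τ x), PSCA J h β q σ τ
      = 1 / (1 + Real.exp (β * (sp σ x * cavity J h σ x) + 2 * q)) := by
  classical
  set r : ℝ := β * (sp σ x * cavity J h σ x) + 2 * q with hr
  set S : ℝ := ∑ τ ∈ Finset.univ.filter (fun τ : V → ℤˣ => σ x ≠ τ x),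
      Real.exp (Fq J h β q σ τ) with hS
  have hSpos : 0 < S := by
    refine Finset.sum_pos (fun τ _ => Real.exp_pos _) ⟨spinFlip σ x, ?_⟩
    simp [spinFlip_apply_self, units_neg_ne (σ x)]
  have hW : (∑ τ' : V → ℤˣ, Real.exp (Fq J h β q σ τ')) = S * (1 + Real.exp r) := by
    rw [← Finset.sum_filter_add_sum_filter_not Finset.univ
      (fun τ : V → ℤˣ => σ x ≠ τ x) (fun τ => Real.exp (Fq J h β q σ τ))]
    have hbij : ∑ τ ∈ Finset.univ.filter (fun τ : V → ℤˣ => ¬σ x ≠ τ x),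
        Real.exp (Fq J h β q σ τ)
        = ∑ τ ∈ Finset.univ.filter (fun τ : V → ℤˣ => σ x ≠ τ x),
          Real.exp (Fq J h β q σ (spinFlip τ x)) := by
      refine Finset.sum_nbij' (fun τ => spinFlip τ x) (fun τ => spinFlip τ x) ?_ ?_ ?_ ?_ ?_
      · intro τ hτ
        simp only [Finset.mem_filter, Finset.mem_univ, true_and, not_not] at hτ ⊢
        rw [spinFlip_apply_self, ← hτ]
        exact units_neg_ne (σ x)
      · intro τ hτ
        simp only [Finset.mem_filter, Finset.mem_univ, true_and, not_not] at hτ ⊢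
        rw [spinFlip_apply_self]
        have := units_ne_iff hτ
        rw [this, neg_neg]
      · intro τ _; exact spinFlip_spinFlip τ x
      · intro τ _; exact spinFlip_spinFlip τ x
      · intro τ _
        rw [spinFlip_spinFlip]
    rw [hbij]
    have hval : ∀ τ ∈ Finset.univ.filter (fun τ : V → ℤˣ => σ x ≠ τ x),
        Real.exp (Fq J h β q σ (spinFlip τ x)) = Real.exp (Fq J h β q σ τ) * Real.exp r := by
      intro τ hτ
      simp only [Finset.mem_filter, Finset.mem_univ, true_and] at hτ
      rw [Fq_flip J h β q hJ σ τ x, ← Real.exp_add]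
      congr 1
      have hτx : τ x = -(σ x) := units_ne_iff hτ
      have hspτ : sp τ x = -sp σ x := by unfold sp; rw [hτx]; push_cast; ring
      rw [hspτ, hr]
      linear_combination (2 * q) * sp_sq σ x
    rw [Finset.sum_congr rfl hval, ← Finset.sum_mul, ← hS]
    ring
  rw [Finset.sum_congr rfl (fun τ _ => PSCA_eq J h β q σ τ), ← Finset.sum_div, ← hS, hW]
  rw [div_eq_div_iff (by positivity) (by positivity)]
  ring
lemma PGflip_eq (J : V → V → ℝ) (h : V → ℝ) (β : ℝ) (hJ : ∀ x y, J x y = J y x)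
    (hJ0 : ∀ x, J x x = 0) (σ : V → ℤˣ) (x : V) :
    PGflip J h β σ x = (1 / (Fintype.card V : ℝ))
      * (1 / (1 + Real.exp (β * (2 * (sp σ x * cavity J h σ x))))) := by
  unfold PGflip
  congr 1
  have hw : wG J h β σ = wG J h β (spinFlip σ x) * Real.exp (β * (2 * (sp σ x * cavity J h σ x))) := by
    unfold wG
    rw [← Real.exp_add, Ham_flip J h hJ hJ0 σ x]
    congr 1
    ring
  rw [hw]
  have hw' : 0 < wG J h β (spinFlip σ x) := Real.exp_pos _
  rw [div_eq_div_iff (by positivity) (by positivity)]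
  ring

lemma Dset_spinFlip (σ : V → ℤˣ) (x : V) : Dset σ (spinFlip σ x) = {x} := by
  ext y
  simp only [Dset, Finset.mem_filter, Finset.mem_univ, true_and, Finset.mem_singleton]
  unfold spinFlip
  rw [Function.update_apply]
  by_cases hy : y = x
  · simp [hy, units_neg_ne (σ x)]
  · simp [hy]

lemma spinFlip_ne (σ : V → ℤˣ) (x : V) : spinFlip σ x ≠ σ := by
  intro hc
  have := congrFun hc x
  rw [spinFlip_apply_self] at this
  exact units_neg_ne (σ x) this.symm

lemma EG_eq (J : V → V → ℝ) (h : V → ℝ) (β : ℝ) (σ : V → ℤˣ) :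
    EG J h β σ = ∑ x, PGflip J h β σ x := by
  unfold EG
  have step1 : ∀ τ : V → ℤˣ, ((Dset σ τ).card : ℝ) * PG J h β σ τ
      = ∑ x ∈ Finset.univ.filter (fun x => τ = spinFlip σ x),
          ((Dset σ τ).card : ℝ) * PGflip J h β σ x := by
    intro τ
    by_cases hτ : τ = σ
    · subst hτ
      have h1 : (Dset τ τ).card = 0 := by simp [Dset]
      simp [h1]
    · rw [PG, if_neg hτ, Finset.mul_sum]
  rw [Finset.sum_congr rfl fun τ _ => step1 τ]
  rw [Finset.sum_congr rfl fun τ _ => Finset.sum_filter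
    (fun x => τ = spinFlip σ x) (fun x => ((Dset σ τ).card : ℝ) * PGflip J h β σ x)]
  rw [Finset.sum_comm]
  refine Finset.sum_congr rfl fun x _ => ?_
  have : ∀ τ : V → ℤˣ, (if τ = spinFlip σ x then ((Dset σ τ).card : ℝ) * PGflip J h β σ x else 0)
      = (if τ = spinFlip σ x then ((Dset σ (spinFlip σ x)).card : ℝ) * PGflip J h β σ x else 0) := by
    intro τ
    by_cases hτ : τ = spinFlip σ x <;> simp [hτ]
  rw [Finset.sum_congr rfl fun τ _ => this τ, Finset.sum_ite_eq' Finset.univ (spinFlip σ x)]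
  simp [Dset_spinFlip]

lemma ESCA_eq (J : V → V → ℝ) (h : V → ℝ) (β q : ℝ) (σ : V → ℤˣ) :
    ESCA J h β q σ = ∑ x, ∑ τ ∈ Finset.univ.filter (fun τ : V → ℤˣ => σ x ≠ τ x),
      PSCA J h β q σ τ := by
  unfold ESCA
  have h1 : ∀ τ : V → ℤˣ, ((Dset σ τ).card : ℝ)
      = ∑ x, if σ x ≠ τ x then (1 : ℝ) else 0 := by
    intro τ
    rw [Dset, Finset.card_filter]
    push_cast
    rfl
  rw [Finset.sum_congr rfl fun τ _ => by rw [h1 τ, Finset.sum_mul]]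
  rw [Finset.sum_comm]
  refine Finset.sum_congr rfl fun x _ => ?_
  rw [Finset.sum_filter]
  refine Finset.sum_congr rfl fun τ _ => ?_
  by_cases hτ : σ x ≠ τ x <;> simp [hτ]
lemma key_ineq (N m K β q : ℝ) (hN : 1 ≤ N) (hβ : 0 ≤ β) (hq : 0 ≤ q) (hm : |m| ≤ K)
    (hcond : Real.exp (2 * q) ≤ N * Real.exp (-(β * K))) :
    (1 / N) * (1 / (1 + Real.exp (β * (2 * m)))) ≤ 1 / (1 + Real.exp (β * m + 2 * q)) := by
  have hN0 : (0 : ℝ) < N := lt_of_lt_of_le one_pos hN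
  have e1 : (0 : ℝ) < Real.exp (β * (2 * m)) := Real.exp_pos _
  have e2 : (0 : ℝ) < Real.exp (β * m + 2 * q) := Real.exp_pos _
  rw [div_mul_div_comm, one_mul, div_le_div_iff₀ (by positivity) (by positivity)]
  have h1 : Real.exp (β * m + 2 * q) = Real.exp (β * m) * Real.exp (2 * q) := by
    rw [← Real.exp_add]
  have h2 : Real.exp (β * m) * Real.exp (-(β * K)) ≤ Real.exp (β * (2 * m)) := by
    rw [← Real.exp_add]
    apply Real.exp_le_exp.2
    have hmK : -K ≤ m := neg_le_of_abs_le hm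
    nlinarith
  have h3 : Real.exp (β * m) * Real.exp (2 * q) ≤ N * Real.exp (β * (2 * m)) := by
    calc Real.exp (β * m) * Real.exp (2 * q) ≤ Real.exp (β * m) * (N * Real.exp (-(β * K))) :=
          mul_le_mul_of_nonneg_left hcond (le_of_lt (Real.exp_pos _))
      _ = N * (Real.exp (β * m) * Real.exp (-(β * K))) := by ring
      _ ≤ N * Real.exp (β * (2 * m)) := mul_le_mul_of_nonneg_left h2 (le_of_lt hN0)
  nlinarith

end AuxProp31

/-- Proposition 3.1: if `2q ≤ log|V| - β K̄`, where
`K̄ = max{|h̃_x(σ)| : x ∈ V, σ ∈ {±1}^V}`, then for every `σ` the expected number of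
spin-flips per update of SCA is at least that of Glauber. -/
theorem sca_more_flips_than_glauber [Nonempty V]
    (J : V → V → ℝ) (h : V → ℝ) (β q : ℝ) (hβ : 0 ≤ β) (hq : 0 ≤ q)
    (hJ : ∀ x y, J x y = J y x) (hJ0 : ∀ x, J x x = 0)
    (Kbar : ℝ)
    (hK : IsGreatest {r : ℝ | ∃ (x : V) (σ : V → ℤˣ), r = |cavity J h σ x|} Kbar)
    (hcond : 2 * q ≤ Real.log (Fintype.card V) - β * Kbar) :
    ∀ σ : V → ℤˣ, EG J h β σ ≤ ESCA J h β q σ := by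
  intro σ
  rw [EG_eq, ESCA_eq]
  have hN0 : (0 : ℝ) < (Fintype.card V : ℝ) := by
    exact_mod_cast Fintype.card_pos
  have hN1 : (1 : ℝ) ≤ (Fintype.card V : ℝ) := by
    exact_mod_cast Fintype.card_pos
  have hexp : Real.exp (2 * q) ≤ (Fintype.card V : ℝ) * Real.exp (-(β * Kbar)) := by
    calc Real.exp (2 * q) ≤ Real.exp (Real.log (Fintype.card V) - β * Kbar) :=
          Real.exp_le_exp.2 hcond
      _ = (Fintype.card V : ℝ) * Real.exp (-(β * Kbar)) := by
          rw [sub_eq_add_neg, Real.exp_add, Real.exp_log hN0]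
  refine Finset.sum_le_sum fun x _ => ?_
  rw [PGflip_eq J h β hJ hJ0 σ x, sca_flip_prob J h β q hJ σ x]
  have hmK : |sp σ x * cavity J h σ x| ≤ Kbar := by
    rw [abs_mul, abs_sp, one_mul]
    exact hK.2 ⟨x, σ, rfl⟩
  exact key_ineq _ _ _ _ _ hN1 hβ hq hmK hexp
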